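/- Let Ψ = (f,g) : ℝⁿ → ℝ² where f(x) = ς(1 − ‖x − e₁‖²) and g(x) = ς(4 − ‖x − 2e₁‖²), with ς(t) = e^{−1/t} for t>0 and 0 otherwise. Then the critical set of Ψ equals {x : ‖x − e₁‖ ≥ 1} ∪ {x : x₂ = ⋯ = xₙ = 0}. -/

import Mathlib

/-!
Both components of `Ψ` are functions of a squared distance, so wherever `ς` is not flat their
derivatives are nonzero multiples of `⟪x - e₁, ·⟫` and `⟪x - 2e₁, ·⟫`. Outside the open unit ball
around `e₁` the first component attains its minimum `0`, hence has zero derivative. Inside that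
ball, since `x - 2e₁ = (x - e₁) - e₁`, the `2 × 2` minors of `dΨ` are nonzero multiples of those
of `(⟪e₁, ·⟫, ⟪x, ·⟫)`, which all vanish exactly when `x` is a multiple of `e₁`.
-/

/-- The smooth cutoff `ς(t) = e^{-1/t}` for `t > 0`, `ς(t) = 0` for `t ≤ 0`. -/
noncomputable def varsigma (t : ℝ) : ℝ := if 0 < t then Real.exp (-1 / t) else 0

open scoped RealInnerProductSpace

lemma varsigma_eq_expNegInvGlue : varsigma = expNegInvGlue := by
  funext t
  rw [varsigma, expNegInvGlue]
  rcases lt_or_ge 0 t with h | h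
  · rw [if_pos h, if_neg (not_le.2 h), neg_div, one_div]
  · rw [if_neg (not_lt.2 h), if_pos h]

lemma varsigma_nonneg (t : ℝ) : 0 ≤ varsigma t := by
  rw [varsigma_eq_expNegInvGlue]
  exact expNegInvGlue.nonneg t

lemma varsigma_of_nonpos {t : ℝ} (h : t ≤ 0) : varsigma t = 0 := by
  rw [varsigma_eq_expNegInvGlue]
  exact expNegInvGlue.zero_of_nonpos h

lemma differentiable_varsigma : Differentiable ℝ varsigma := by
  rw [varsigma_eq_expNegInvGlue]
  exact (expNegInvGlue.contDiff (n := 1)).differentiable one_ne_zero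

lemma hasDerivAt_varsigma {t : ℝ} (ht : 0 < t) :
    HasDerivAt varsigma (Real.exp (-1 / t) * (t ^ 2)⁻¹) t := by
  have h : HasDerivAt (fun s : ℝ => Real.exp (-s⁻¹)) (Real.exp (-t⁻¹) * (t ^ 2)⁻¹) t := by
    simpa using (hasDerivAt_inv ht.ne').neg.exp
  refine (h.congr_of_eventuallyEq ?_).congr_deriv (by rw [neg_div, one_div])
  filter_upwards [eventually_gt_nhds ht] with s hs
  rw [varsigma, if_pos hs, neg_div, one_div]

section Bump

variable {E : Type*} [NormedAddCommGroup E] [InnerProductSpace ℝ E] (c : E) (r : ℝ)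

lemma differentiable_varsigma_sub_norm_sq :
    Differentiable ℝ fun y : E => varsigma (r - ‖y - c‖ ^ 2) :=
  differentiable_varsigma.comp (((differentiable_id.sub_const c).norm_sq ℝ).const_sub r)

lemma fderiv_varsigma_sub_norm_sq_of_le {x : E} (h : r ≤ ‖x - c‖ ^ 2) :
    fderiv ℝ (fun y : E => varsigma (r - ‖y - c‖ ^ 2)) x = 0 := by
  refine IsLocalMin.fderiv_eq_zero (Filter.Eventually.of_forall fun y => ?_)
  simp only [varsigma_of_nonpos (sub_nonpos.2 h), varsigma_nonneg]

lemma hasFDerivAt_varsigma_sub_norm_sq_of_lt {x : E} (h : ‖x - c‖ ^ 2 < r) :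
    ∃ a : ℝ, a ≠ 0 ∧
      HasFDerivAt (fun y : E => varsigma (r - ‖y - c‖ ^ 2)) (a • innerSL ℝ (x - c)) x := by
  have ht : 0 < r - ‖x - c‖ ^ 2 := sub_pos.2 h
  have hd := (hasDerivAt_varsigma ht).comp_hasFDerivAt x
    (((hasFDerivAt_id x).sub_const c).norm_sq.const_sub r)
  refine ⟨-(2 * (Real.exp (-1 / (r - ‖x - c‖ ^ 2)) * ((r - ‖x - c‖ ^ 2) ^ 2)⁻¹)),
    neg_ne_zero.2 (by positivity), hd.congr_fderiv ?_⟩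
  ext v
  simp
  ring

end Bump

lemma ContinuousLinearMap.surjective_prod_iff_exists_det_ne_zero {K M : Type*} [Field K]
    [TopologicalSpace K] [AddCommGroup M] [Module K M] [TopologicalSpace M]
    (φ ψ : M →L[K] K) :
    Function.Surjective (φ.prod ψ) ↔ ∃ v w, φ v * ψ w - φ w * ψ v ≠ 0 := by
  constructor
  · intro hs
    obtain ⟨v, hv⟩ := hs (1, 0)
    obtain ⟨w, hw⟩ := hs (0, 1)
    simp only [ContinuousLinearMap.prod_apply, Prod.mk.injEq] at hv hw
    exact ⟨v, w, by simp [hv, hw]⟩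
  · rintro ⟨v, w, hd⟩ ⟨p, q⟩
    refine ⟨((p * ψ w - q * φ w) / (φ v * ψ w - φ w * ψ v)) • v +
      ((q * φ v - p * ψ v) / (φ v * ψ w - φ w * ψ v)) • w, Prod.ext ?_ ?_⟩ <;>
    simp only [ContinuousLinearMap.prod_apply, map_add, map_smul, Prod.fst_add, Prod.snd_add,
      Prod.smul_fst, Prod.smul_snd, smul_eq_mul] <;>
    rw [div_mul_eq_mul_div, div_mul_eq_mul_div, ← add_div, div_eq_iff hd] <;> ring

lemma EuclideanSpace.forall_inner_det_eq_zero_iff {ι : Type*} [Fintype ι] [DecidableEq ι]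
    (x : EuclideanSpace ℝ ι) (j : ι) :
    (∀ v w, ⟪EuclideanSpace.single j 1, v⟫ * ⟪x, w⟫ - ⟪EuclideanSpace.single j 1, w⟫ * ⟪x, v⟫ = 0)
      ↔ ∀ i, i ≠ j → x i = 0 := by
  constructor
  · intro h i hij
    simpa [EuclideanSpace.inner_single_left, EuclideanSpace.inner_single_right, hij] using
      h (EuclideanSpace.single j 1) (EuclideanSpace.single i 1)
  · intro hx v w
    have hxj : x = x j • EuclideanSpace.single j 1 := by
      ext i
      by_cases hi : i = j
      · subst hi; simp
      · simp [hi, hx i hi]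
    rw [hxj, real_inner_smul_left, real_inner_smul_left]
    ring

/-- For `Ψ = (f,g) : ℝⁿ → ℝ²` with `f(x) = ς(1 − ‖x − e₁‖²)` and
`g(x) = ς(4 − ‖x − 2e₁‖²)`, the critical set of `Ψ` (points where the derivative is not
surjective) equals `{x : ‖x − e₁‖ ≥ 1} ∪ {x : x₂ = ⋯ = xₙ = 0}`. -/
theorem stmt19 {n : ℕ} [NeZero n] :
    let e₁ : EuclideanSpace ℝ (Fin n) := EuclideanSpace.single 0 1
    let Ψ : EuclideanSpace ℝ (Fin n) → ℝ × ℝ := fun x =>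
      (varsigma (1 - ‖x - e₁‖ ^ 2), varsigma (4 - ‖x - (2 : ℝ) • e₁‖ ^ 2))
    {x | ¬ Function.Surjective (fderiv ℝ Ψ x)} =
      {x | 1 ≤ ‖x - e₁‖} ∪
        {x : EuclideanSpace ℝ (Fin n) | ∀ i : Fin n, i ≠ 0 → x i = 0} := by
  intro e₁ Ψ
  ext x
  have hΨ : fderiv ℝ Ψ x = (fderiv ℝ (fun y => varsigma (1 - ‖y - e₁‖ ^ 2)) x).prod
      (fderiv ℝ (fun y => varsigma (4 - ‖y - (2 : ℝ) • e₁‖ ^ 2)) x) :=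
    (differentiable_varsigma_sub_norm_sq e₁ 1 x).fderiv_prodMk
      (differentiable_varsigma_sub_norm_sq _ 4 x)
  simp only [Set.mem_ofPred_eq, Set.mem_union, hΨ,
    ContinuousLinearMap.surjective_prod_iff_exists_det_ne_zero]
  rcases le_or_gt 1 ‖x - e₁‖ with hx | hx
  · simp [hx, fderiv_varsigma_sub_norm_sq_of_le e₁ 1 (one_le_pow₀ hx)]
  have he₁ : ‖e₁‖ = 1 := by simp [e₁]
  have hx₂ : ‖x - (2 : ℝ) • e₁‖ < 2 := calc
    ‖x - (2 : ℝ) • e₁‖ = ‖(x - e₁) - e₁‖ := by rw [two_smul, sub_add_eq_sub_sub]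
    _ ≤ ‖x - e₁‖ + ‖e₁‖ := norm_sub_le _ _
    _ < 2 := by linarith
  obtain ⟨a, ha, hf⟩ := hasFDerivAt_varsigma_sub_norm_sq_of_lt e₁ 1
    (pow_lt_one₀ (norm_nonneg _) hx two_ne_zero)
  obtain ⟨b, hb, hg⟩ := hasFDerivAt_varsigma_sub_norm_sq_of_lt ((2 : ℝ) • e₁) 4
    (by nlinarith [norm_nonneg (x - (2 : ℝ) • e₁)])
  have hdet : ∀ v w, (a • innerSL ℝ (x - e₁)) v * (b • innerSL ℝ (x - (2 : ℝ) • e₁)) w -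
      (a • innerSL ℝ (x - e₁)) w * (b • innerSL ℝ (x - (2 : ℝ) • e₁)) v =
      a * b * (⟪e₁, v⟫ * ⟪x, w⟫ - ⟪e₁, w⟫ * ⟪x, v⟫) := by
    intro v w
    simp only [FunLike.coe_smul, Pi.smul_apply, innerSL_apply_apply, smul_eq_mul,
      inner_sub_left, real_inner_smul_left]
    ring
  simp only [hf.fderiv, hg.fderiv, hdet, mul_ne_zero_iff, ha, hb, ne_eq, not_false_eq_true,
    true_and, not_le.2 hx, false_or]
  push Not
  exact EuclideanSpace.forall_inner_det_eq_zero_iff x 0
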